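/- Fix n ≥ 2 and nonnegative integers m, ℓ. Let B_ℓ = { x ∈ (ℤ_{≥0})^n : Σ x_i = ℓ } and B̃_ℓ = { y ∈ (ℤ_{≥0})^{n−1} : Σ y_i ≤ ℓ }, with the bijection γ_ℓ : B_ℓ → B̃_ℓ, (x_1,…,x_n) ↦ (x_2,…,x_n), whose inverse sends (y_1,…,y_{n−1}) to (ℓ − Σ y_i, y_1,…,y_{n−1}). Let R_{mℓ} : B_m × B_ℓ → B_ℓ × B_m be the combinatorial R-matrix, and define R̃_{mℓ} = (γ_ℓ × γ_m) ∘ R_{mℓ} ∘ (γ_m^{−1} × γ_ℓ^{−1}) : B̃_m × B̃_ℓ → B̃_ℓ × B̃_m. Let ι be the reversal map on (n−1)-tuples and ρ̃(a,b) = (ι(b), ι(a)). Then ρ̃ ∘ R̃_{mℓ} ∘ ρ̃ = R̃_{ℓm} as maps on B̃_ℓ × B̃_m. -/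

import Mathlib

/-- `K_i = min_{j=0,…,n−1} ( Σ_{p=1}^{j} w_{i−p} + Σ_{p=j+2}^{n} x_{i−p} )`,
subscripts modulo `n`. -/
def Kfun (n : ℕ) [NeZero n] (w x : ZMod n → ℤ) (i : ZMod n) : ℤ :=
  (Finset.range n).inf' (Finset.nonempty_range_iff.mpr (NeZero.ne n))
    (fun j => (∑ p ∈ Finset.Icc 1 j, w (i - ((p : ℕ) : ZMod n))) +
      ∑ p ∈ Finset.Icc (j + 2) n, x (i - ((p : ℕ) : ZMod n)))

/-- The combinatorial R-matrix: `R(w,x) = (x′,w′)` with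
`x′_i = x_i + K_{i+1} − K_i` and `w′_i = w_i + K_i − K_{i+1}`. -/
def Rmat (n : ℕ) [NeZero n] (wx : (ZMod n → ℤ) × (ZMod n → ℤ)) :
    (ZMod n → ℤ) × (ZMod n → ℤ) :=
  (fun i => wx.2 i + Kfun n wx.1 wx.2 (i + 1) - Kfun n wx.1 wx.2 i,
   fun i => wx.1 i + Kfun n wx.1 wx.2 i - Kfun n wx.1 wx.2 (i + 1))

/-- `γ_ℓ : B_ℓ → B̃_ℓ`, `(x_1,…,x_n) ↦ (x_2,…,x_n)`.  An `(n−1)`-tuple is modelled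
as a function on `ZMod n` whose entries lie on the nonzero classes `1,…,n−1`
and whose (unused) slot at the class `0` is set to `0`. -/
def gammaMap (n : ℕ) (x : ZMod n → ℤ) : ZMod n → ℤ :=
  fun q => if q = 0 then 0 else x (q + 1)

/-- `γ_ℓ⁻¹ : B̃_ℓ → B_ℓ`, `(y_1,…,y_{n−1}) ↦ (ℓ − Σ y_i, y_1,…,y_{n−1})`. -/
def gammaInv (n : ℕ) [NeZero n] (ℓ : ℕ) (y : ZMod n → ℤ) : ZMod n → ℤ :=
  fun i => if i = 1 then (ℓ : ℤ) - ∑ q ∈ Finset.univ.erase (0 : ZMod n), y q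
    else y (i - 1)

/-- `R̃_{mℓ} = (γ_ℓ × γ_m) ∘ R_{mℓ} ∘ (γ_m⁻¹ × γ_ℓ⁻¹) : B̃_m × B̃_ℓ → B̃_ℓ × B̃_m`. -/
def Rtil (n : ℕ) [NeZero n] (m ℓ : ℕ) (ab : (ZMod n → ℤ) × (ZMod n → ℤ)) :
    (ZMod n → ℤ) × (ZMod n → ℤ) :=
  (gammaMap n (Rmat n (gammaInv n m ab.1, gammaInv n ℓ ab.2)).1,
   gammaMap n (Rmat n (gammaInv n m ab.1, gammaInv n ℓ ab.2)).2)

/-- The reversal map `ι` on `(n−1)`-tuples: `ι(a)_p = a_{n−p}`. -/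
def iotaMap (n : ℕ) (a : ZMod n → ℤ) : ZMod n → ℤ := fun q => a (-q)

/-- `ρ̃(a,b) = (ι(b), ι(a))`. -/
def rhoTil (n : ℕ) (ab : (ZMod n → ℤ) × (ZMod n → ℤ)) :
    (ZMod n → ℤ) × (ZMod n → ℤ) :=
  (iotaMap n ab.2, iotaMap n ab.1)

/-! Substituting `(x(2 - ·), w(2 - ·))` into the formula for `K` and reindexing both the
minimum (`j ↦ n - 1 - j`) and the two sums (`p ↦ n + 1 - p`) gives `K_{3 - i}(w, x)`, so the
R-matrix commutes with "swap the factors and reflect `t ↦ 2 - t`". Under `γ`, this reflection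
of `n`-tuples becomes the reversal `ι` of `(n - 1)`-tuples. -/

lemma Finset.sum_Icc_reflect {M : Type*} [AddCommMonoid M] (g : ℕ → M) {a b N : ℕ}
    (ha : a ≤ N) (hb : b ≤ N) :
    ∑ p ∈ Finset.Icc a b, g p = ∑ p ∈ Finset.Icc (N - b) (N - a), g (N - p) := by
  refine Finset.sum_nbij' (N - ·) (N - ·) ?_ ?_ ?_ ?_ ?_ <;> intro p hp <;>
    simp only [Finset.mem_Icc] at hp ⊢
  all_goals first | omega | (congr 1; omega)

lemma sum_erase_zero_comp_neg {G M : Type*} [AddGroup G] [Fintype G] [DecidableEq G]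
    [AddCommGroup M] (f : G → M) :
    ∑ q ∈ Finset.univ.erase 0, f (-q) = ∑ q ∈ Finset.univ.erase 0, f q := by
  rw [Finset.sum_erase_eq_sub (Finset.mem_univ _), Finset.sum_erase_eq_sub (Finset.mem_univ _),
    neg_zero]
  congr 1
  exact Equiv.sum_comp (Equiv.neg G) f

lemma ZMod.sub_natCast_succ_sub {n : ℕ} (c : ZMod n) {p : ℕ} (hp : p ≤ n + 1) :
    c - ((n + 1 - p : ℕ) : ZMod n) = c - 1 + p := by
  rw [Nat.cast_sub hp]
  push_cast [ZMod.natCast_self]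
  ring

lemma Kfun_summand_comp_two_sub {n : ℕ} (w x : ZMod n → ℤ) (i : ZMod n) {j : ℕ} (hj : j < n) :
    (∑ p ∈ Finset.Icc 1 (n - 1 - j), x (2 - (i - (p : ZMod n)))) +
        ∑ p ∈ Finset.Icc (n - 1 - j + 2) n, w (2 - (i - (p : ZMod n)))
      = (∑ p ∈ Finset.Icc 1 j, w (3 - i - (p : ZMod n))) +
        ∑ p ∈ Finset.Icc (j + 2) n, x (3 - i - (p : ZMod n)) := by
  rw [add_comm,
    Finset.sum_Icc_reflect (a := n - 1 - j + 2) (N := n + 1) _ (by omega) (by omega),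
    Finset.sum_Icc_reflect (a := 1) (b := n - 1 - j) (N := n + 1) _ (by omega) (by omega),
    show n + 1 - n = 1 by omega, show n + 1 - (n - 1 - j + 2) = j by omega,
    show n + 1 - (n - 1 - j) = j + 2 by omega, Nat.add_sub_cancel]
  congr 1 <;> refine Finset.sum_congr rfl fun p hp => ?_ <;>
    rw [ZMod.sub_natCast_succ_sub i (by simp only [Finset.mem_Icc] at hp; omega)] <;> ring_nf

lemma Kfun_comp_two_sub {n : ℕ} [NeZero n] (w x : ZMod n → ℤ) (i : ZMod n) :
    Kfun n (fun t => x (2 - t)) (fun t => w (2 - t)) i = Kfun n w x (3 - i) := by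
  unfold Kfun
  rw [Finset.inf'_congr _ (Finset.range_image_pred_top_sub n).symm fun _ _ => rfl,
    Finset.inf'_image]
  exact Finset.inf'_congr _ rfl fun j hj =>
    Kfun_summand_comp_two_sub w x i (Finset.mem_range.mp hj)

lemma Rmat_comp_two_sub {n : ℕ} [NeZero n] (w x : ZMod n → ℤ) :
    Rmat n (fun i => x (2 - i), fun i => w (2 - i)) =
      (fun i => (Rmat n (w, x)).2 (2 - i), fun i => (Rmat n (w, x)).1 (2 - i)) := by
  simp only [Rmat, Kfun_comp_two_sub]
  refine Prod.ext (funext fun i => ?_) (funext fun i => ?_) <;>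
    simp only [show (3 : ZMod n) - (i + 1) = 2 - i by ring,
      show (3 : ZMod n) - i = 2 - i + 1 by ring]

lemma gammaInv_iotaMap {n : ℕ} [NeZero n] (ℓ : ℕ) (a : ZMod n → ℤ) :
    gammaInv n ℓ (iotaMap n a) = fun i => gammaInv n ℓ a (2 - i) := by
  funext i
  have two_sub_eq_one : 2 - i = 1 ↔ i = 1 := by
    constructor <;> intro h <;> linear_combination -h
  simp only [gammaInv, iotaMap, two_sub_eq_one, sum_erase_zero_comp_neg a]
  split_ifs
  · rfl
  · congr 1; ring

lemma gammaMap_comp_two_sub {n : ℕ} (y : ZMod n → ℤ) :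
    gammaMap n (fun i => y (2 - i)) = iotaMap n (gammaMap n y) := by
  funext q
  simp only [gammaMap, iotaMap, neg_eq_zero]
  split_ifs
  · rfl
  · congr 1; ring

lemma iotaMap_iotaMap {n : ℕ} (a : ZMod n → ℤ) : iotaMap n (iotaMap n a) = a := by
  funext q
  simp only [iotaMap, neg_neg]

theorem stmt_16_general (n : ℕ) [NeZero n] (m ℓ : ℕ)
    (a b : ZMod n → ℤ) :
    rhoTil n (Rtil n m ℓ (rhoTil n (a, b))) = Rtil n ℓ m (a, b) := by
  simp only [rhoTil, Rtil, gammaInv_iotaMap, Rmat_comp_two_sub, gammaMap_comp_two_sub,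
    iotaMap_iotaMap]

/-- `ρ̃ ∘ R̃_{mℓ} ∘ ρ̃ = R̃_{ℓm}` on `B̃_ℓ × B̃_m` (Lemma 7.5 (ii) of the paper). -/
theorem stmt_16 (n : ℕ) [NeZero n] (hn : 2 ≤ n) (m ℓ : ℕ)
    (a b : ZMod n → ℤ)
    (ha0 : a 0 = 0) (ha_nonneg : ∀ q : ZMod n, q ≠ 0 → 0 ≤ a q)
    (ha_sum : ∑ q : ZMod n, a q ≤ (ℓ : ℤ))
    (hb0 : b 0 = 0) (hb_nonneg : ∀ q : ZMod n, q ≠ 0 → 0 ≤ b q)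
    (hb_sum : ∑ q : ZMod n, b q ≤ (m : ℤ)) :
    rhoTil n (Rtil n m ℓ (rhoTil n (a, b))) = Rtil n ℓ m (a, b) :=
  stmt_16_general n m ℓ a b
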